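/- arXiv:2111.03155 — 2 statements merged into one kernel-verified Lean document; each statement's English description precedes it below -/
import Mathlib

section
/- Contractivity of ODEs via logarithmic Lipschitz constants: let X(t) and Y(t) be two solutions of the ODE ẋ = F(x, t) remaining in a set Y ⊆ ℝⁿ on [0, T], where F(·, t) has s-lub logarithmic Lipschitz constant at most c uniformly in t (c ∈ ℝ). Then for all t ∈ [0, T], ‖X(t) − Y(t)‖_X ≤ e^{ct}·‖X(0) − Y(0)‖_X. In particular, if c < 0 the solutions converge to each other exponentially. -/
/-!
The map `h ↦ ‖w + h • D‖` is convex, hence has a right derivative at `0`. With `w = x s - y s`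
and `D = ẋ s - ẏ s` this right derivative bounds the upper right Dini derivative of `‖x - y‖`
at `s`, while the hypothesis on `llQuot` bounds it by `c ‖x s - y s‖`; Grönwall's inequality
then gives the exponential estimate.
-/

open Filter Topology

/-- The incremental quotient whose limit as `h → 0⁺` (then sup over pairs) defines
the s-lub logarithmic Lipschitz constant `M⁺_X[G]`. -/
noncomputable def llQuot {X : Type*} [NormedAddCommGroup X] [NormedSpace ℝ X]
    (G : X → X) (u v : X) (h : ℝ) : ℝ :=
  (‖u - v + h • (G u - G v)‖ / ‖u - v‖ - 1) / h

open Set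

section

variable {E : Type*} [NormedAddCommGroup E] [NormedSpace ℝ E]

theorem convexOn_norm_add_smul (w D : E) : ConvexOn ℝ univ fun h : ℝ => ‖w + h • D‖ := by
  simpa [Function.comp_def, AffineMap.lineMap_apply_module', add_comm] using
    (convexOn_norm convex_univ).comp_affineMap (AffineMap.lineMap (k := ℝ) w (w + D))

theorem differentiableWithinAt_Ioi_norm_add_smul (w D : E) :
    DifferentiableWithinAt ℝ (fun h : ℝ => ‖w + h • D‖) (Ioi 0) 0 :=
  (convexOn_norm_add_smul w D).differentiableWithinAt_Ioi_of_mem_interior (by simp)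

theorem slope_norm_le_slope_norm_add_smul (g : ℝ → E) (D : E) {s z : ℝ} (hsz : s < z) :
    slope (fun z => ‖g z‖) s z ≤
      slope (fun h : ℝ => ‖g s + h • D‖) 0 (z - s) + ‖slope g s z - D‖ := by
  have hzs : 0 < z - s := sub_pos.2 hsz
  have hdecomp : g z = (g s + (z - s) • D) + (z - s) • (slope g s z - D) := by
    rw [smul_sub, sub_smul_slope, vsub_eq_sub]
    abel
  have htri : ‖g z‖ ≤ ‖g s + (z - s) • D‖ + (z - s) * ‖slope g s z - D‖ := by
    calc ‖g z‖ ≤ ‖g s + (z - s) • D‖ + ‖(z - s) • (slope g s z - D)‖ :=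
          hdecomp ▸ norm_add_le _ _
      _ = _ := by rw [norm_smul, Real.norm_of_nonneg hzs.le]
  simp only [slope_def_field, sub_zero, zero_smul, add_zero]
  rw [div_add' _ _ _ hzs.ne', div_le_div_iff_of_pos_right hzs]
  linarith

theorem eventually_slope_norm_lt {g : ℝ → E} {D : E} {s L r : ℝ}
    (hg : HasDerivWithinAt g D (Ioi s) s)
    (hL : HasDerivWithinAt (fun h : ℝ => ‖g s + h • D‖) L (Ioi 0) 0) (hr : L < r) :
    ∀ᶠ z in 𝓝[>] s, slope (fun z => ‖g z‖) s z < r := by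
  have hshift : Tendsto (· - s) (𝓝[>] s) (𝓝[>] 0) := by
    have := (continuous_sub_right s).continuousWithinAt.tendsto_nhdsWithin (x := s)
      (fun z (hz : s < z) => sub_pos.2 hz)
    rwa [sub_self] at this
  have hnorm : Tendsto (fun z => slope (fun h : ℝ => ‖g s + h • D‖) 0 (z - s)) (𝓝[>] s) (𝓝 L) :=
    ((hasDerivWithinAt_iff_tendsto_slope' self_notMem_Ioi).1 hL).comp hshift
  have herr : Tendsto (fun z => ‖slope g s z - D‖) (𝓝[>] s) (𝓝 0) :=
    tendsto_iff_norm_sub_tendsto_zero.1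
      ((hasDerivWithinAt_iff_tendsto_slope' self_notMem_Ioi).1 hg)
  filter_upwards [(hnorm.add herr).eventually_lt_const (by simpa using hr), self_mem_nhdsWithin]
    with z hlt hz
  exact (slope_norm_le_slope_norm_add_smul g D hz).trans_lt hlt

theorem llQuot_eq_slope_div (G : E → E) {u v : E} (huv : u ≠ v) (h : ℝ) :
    llQuot G u v h = slope (fun h : ℝ => ‖u - v + h • (G u - G v)‖) 0 h / ‖u - v‖ := by
  have : ‖u - v‖ ≠ 0 := norm_ne_zero_iff.2 (sub_ne_zero.2 huv)
  simp only [llQuot, slope_def_field, sub_zero, zero_smul, add_zero]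
  field_simp

theorem rightDeriv_le_of_llQuot_le {G : E → E} {u v : E} {c L : ℝ}
    (hG : u ≠ v → ∀ L, Tendsto (llQuot G u v) (𝓝[>] 0) (𝓝 L) → L ≤ c)
    (hL : HasDerivWithinAt (fun h : ℝ => ‖u - v + h • (G u - G v)‖) L (Ioi 0) 0) :
    L ≤ c * ‖u - v‖ := by
  rcases eq_or_ne u v with rfl | huv
  · simp only [sub_self, smul_zero, add_zero, norm_zero, mul_zero] at hL ⊢
    exact ((uniqueDiffWithinAt_Ioi 0).eq_deriv _ hL (hasDerivWithinAt_const _ _ _)).le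
  · have hpos : 0 < ‖u - v‖ := norm_pos_iff.2 (sub_ne_zero.2 huv)
    have hquot : Tendsto (llQuot G u v) (𝓝[>] 0) (𝓝 (L / ‖u - v‖)) := by
      simpa only [funext (llQuot_eq_slope_div G huv)] using
        ((hasDerivWithinAt_iff_tendsto_slope' self_notMem_Ioi).1 hL).div_const _
    exact (div_le_iff₀ hpos).1 (hG huv _ hquot)

end

theorem stmt12_general {E : Type*} [NormedAddCommGroup E] [NormedSpace ℝ E]
    (S : Set E) (F : E → ℝ → E) (c : ℝ) (T : ℝ)
    (hLip : ∀ t ∈ Set.Icc 0 T, ∀ u ∈ S, ∀ v ∈ S, u ≠ v → ∀ L : ℝ,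
      Tendsto (llQuot (fun z => F z t) u v) (𝓝[>] (0:ℝ)) (𝓝 L) → L ≤ c)
    (x y : ℝ → E)
    (hx : ∀ t ∈ Set.Icc 0 T, HasDerivAt x (F (x t) t) t ∧ x t ∈ S)
    (hy : ∀ t ∈ Set.Icc 0 T, HasDerivAt y (F (y t) t) t ∧ y t ∈ S) :
    ∀ t ∈ Set.Icc 0 T, ‖x t - y t‖ ≤ Real.exp (c * t) * ‖x 0 - y 0‖ := by
  have hderiv : ∀ s ∈ Icc 0 T, HasDerivAt (fun z => x z - y z) (F (x s) s - F (y s) s) s :=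
    fun s hs => (hx s hs).1.sub (hy s hs).1
  have hcont : ContinuousOn (fun s => ‖x s - y s‖) (Icc 0 T) :=
    fun s hs => (hderiv s hs).continuousAt.continuousWithinAt.norm
  have hdini : ∀ s ∈ Ico 0 T, ∀ r, c * ‖x s - y s‖ < r →
      ∃ᶠ z in 𝓝[>] s, (z - s)⁻¹ * (‖x z - y z‖ - ‖x s - y s‖) < r := by
    intro s hs r hr
    have hsIcc := Ico_subset_Icc_self hs
    have hL := (differentiableWithinAt_Ioi_norm_add_smul (x s - y s)
      (F (x s) s - F (y s) s)).hasDerivWithinAt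
    have hLc := rightDeriv_le_of_llQuot_le
      (hLip s hsIcc _ (hx s hsIcc).2 _ (hy s hsIcc).2) hL
    exact (eventually_slope_norm_lt (hderiv s hsIcc).hasDerivWithinAt hL
      (hLc.trans_lt hr)).frequently
  intro t ht
  have := le_gronwallBound_of_liminf_deriv_right_le hcont hdini le_rfl
    (fun _ _ => (add_zero _).ge) t ht
  rwa [gronwallBound_ε0, sub_zero, mul_comm] at this

/-- Contractivity of ODEs via logarithmic Lipschitz constants: if the s-lub
logarithmic Lipschitz constant of `F(·, t)` on `S` is at most `c` uniformly in `t`,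
then any two solutions `x, y` of `ẋ = F(x, t)` remaining in `S` on `[0, T]` satisfy
`‖x t − y t‖ ≤ e^{c t} ‖x 0 − y 0‖`. -/
theorem stmt12 {E : Type*} [NormedAddCommGroup E] [NormedSpace ℝ E]
    [FiniteDimensional ℝ E] (S : Set E) (F : E → ℝ → E) (c : ℝ) (T : ℝ) (hT : 0 ≤ T)
    (hreg_x : ∀ t ∈ Set.Icc 0 T, ContDiffOn ℝ 1 (fun z => F z t) S)
    (hreg_t : ∀ z ∈ S, ContinuousOn (F z) (Set.Icc 0 T))
    (hLip : ∀ t ∈ Set.Icc 0 T, ∀ u ∈ S, ∀ v ∈ S, u ≠ v → ∀ L : ℝ,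
      Tendsto (llQuot (fun z => F z t) u v) (𝓝[>] (0:ℝ)) (𝓝 L) → L ≤ c)
    (x y : ℝ → E)
    (hx : ∀ t ∈ Set.Icc 0 T, HasDerivAt x (F (x t) t) t ∧ x t ∈ S)
    (hy : ∀ t ∈ Set.Icc 0 T, HasDerivAt y (F (y t) t) t ∧ y t ∈ S) :
    ∀ t ∈ Set.Icc 0 T, ‖x t - y t‖ ≤ Real.exp (c * t) * ‖x 0 - y 0‖ :=
  stmt12_general S F c T hLip x y hx hy
end

section
/- For the stochastic Van der Pol system with drift F(x, y) = (x − x³/3 − y, x) and diffusion G(x, y) = (σ(1 + 4x), σ(1 + 4y)), the modified drift Jacobian satisfies sup_{(x,y)∈ℝ²} μ₂[J_{F − (1/2)J_G G}(x, y)] = 1 − 8σ², where μ₂[A] = (1/2)·λ_max(A + Aᵀ) is the logarithmic norm induced by the Euclidean norm. In particular this supremum is negative whenever σ > 1/√8. -/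
open Filter Topology Matrix

/-- The logarithmic norm induced by the Euclidean norm on ℝ²:
`μ₂[A] = (1/2)·λ_max(A + Aᵀ)`, where `λ_max` is the largest eigenvalue
(the supremum of the real spectrum) of the symmetric matrix `A + Aᵀ`. -/
noncomputable def mu2 (A : Matrix (Fin 2) (Fin 2) ℝ) : ℝ :=
  (1 / 2) * sSup (spectrum ℝ (A + Aᵀ))

/-- The Jacobian of the modified drift `F − (1/2)J_G G` of the stochastic Van der Pol
system with drift `F(x,y) = (x − x³/3 − y, x)` and diffusion
`G(x,y) = (σ(1+4x), σ(1+4y))`, namely `[[1 − x² − 8σ², −1], [1, −8σ²]]`. -/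
def vdpModJac (σ x y : ℝ) : Matrix (Fin 2) (Fin 2) ℝ :=
  !![1 - x ^ 2 - 8 * σ ^ 2, -1; 1, -8 * σ ^ 2]

lemma spectrum_diag2 (a b : ℝ) : spectrum ℝ (!![a, 0; 0, b]) = {a, b} := by
  ext z
  rw [spectrum.mem_iff, Matrix.isUnit_iff_isUnit_det]
  have h1 : (algebraMap ℝ (Matrix (Fin 2) (Fin 2) ℝ)) z - !![a, 0; 0, b]
      = !![z - a, 0; 0, z - b] := by
    have : (algebraMap ℝ (Matrix (Fin 2) (Fin 2) ℝ)) z = z • (1 : Matrix (Fin 2) (Fin 2) ℝ) := by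
      simp [Algebra.algebraMap_eq_smul_one]
    rw [this]
    ext i j
    fin_cases i <;> fin_cases j <;> simp [Matrix.one_apply]
  rw [h1, Matrix.det_fin_two_of]
  simp only [mul_zero, sub_zero, isUnit_iff_ne_zero, not_not, mul_eq_zero, sub_eq_zero]
  constructor
  · rintro (rfl | rfl) <;> simp [Set.mem_insert_iff]
  · rintro (rfl | h)
    · left; rfl
    · right; exact h

lemma mu2_vdp (σ x y : ℝ) :
    mu2 (vdpModJac σ x y) = max (1 - x ^ 2 - 8 * σ ^ 2) (-8 * σ ^ 2) := by
  have hA : vdpModJac σ x y + (vdpModJac σ x y)ᵀ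
      = !![2 * (1 - x ^ 2 - 8 * σ ^ 2), 0; 0, 2 * (-8 * σ ^ 2)] := by
    ext i j
    fin_cases i <;> fin_cases j <;> simp [vdpModJac, Matrix.transpose_apply, Matrix.vecHead, Matrix.vecTail] <;> ring
  rw [mu2, hA, spectrum_diag2]
  rw [csSup_pair]
  rw [max_def, max_def]
  split_ifs with h1 h2 h2 <;> try ring
  · nlinarith
  · nlinarith

/-- `sup_{(x,y)∈ℝ²} μ₂[J_{F − (1/2)J_G G}(x, y)] = 1 − 8σ²`; in particular this
supremum is negative whenever `σ > 1/√8`. -/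
theorem stmt17 (σ : ℝ) :
    IsLUB {r : ℝ | ∃ x y : ℝ, r = mu2 (vdpModJac σ x y)} (1 - 8 * σ ^ 2) ∧
    (1 / Real.sqrt 8 < σ → 1 - 8 * σ ^ 2 < 0) := by
  constructor
  · constructor
    · rintro r ⟨x, y, rfl⟩
      rw [mu2_vdp]
      apply max_le <;> nlinarith [sq_nonneg x, sq_nonneg σ]
    · intro b hb
      have : (1 - 8 * σ ^ 2) ∈ {r : ℝ | ∃ x y : ℝ, r = mu2 (vdpModJac σ x y)} := by
        refine ⟨0, 0, ?_⟩
        rw [mu2_vdp]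
        rw [max_eq_left (by nlinarith)]
        ring
      exact hb this
  · intro h
    have h8 : (0:ℝ) < Real.sqrt 8 := Real.sqrt_pos.mpr (by norm_num)
    have hs : Real.sqrt 8 * Real.sqrt 8 = 8 := Real.mul_self_sqrt (by norm_num)
    have h2 : (1 / Real.sqrt 8) * (1 / Real.sqrt 8) < σ * σ :=
      mul_self_lt_mul_self (by positivity) h
    have h3 : (1 / Real.sqrt 8) * (1 / Real.sqrt 8) = 1 / 8 := by
      rw [div_mul_div_comm, hs]; norm_num
    rw [h3] at h2
    nlinarith [h2]
end
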